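/- Let A be a class of sets, let α < η ≤ ζ be ordinals, and let j : ⟨V_η, ∈, A ∩ V_η⟩ → ⟨V_ζ, ∈, A ∩ V_ζ⟩ be an elementary embedding with critical point α and j(α) > η. Suppose M ∈ A ∩ V_η is an ordinal L_std-structure whose domain is an ordinal γ with α ≤ γ < η. Then j(M) ∈ A ∩ V_ζ, j(M) is an ordinal L_std-structure with domain j(γ) > η > γ, and the restriction j ↾ γ is an L_std-elementary embedding from M into j(M). -/

import Mathlib

open FirstOrder

universe u

/-- The relations of the standard language `L_std`: one binary relation symbol `ε` and one
unary relation symbol `R`. -/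
inductive LStdRel : ℕ → Type
  | eps : LStdRel 2
  | r : LStdRel 1

/-- The standard first-order language `L_std`, with one binary relation symbol `ε` and one
unary relation symbol `R`. -/
def LStd : FirstOrder.Language := ⟨fun _ => Empty, LStdRel⟩

/-- The `L_std`-structure coded by the ZFC sets `M` (the domain), `E` (a binary relation on `M`,
coded as a set of Kuratowski pairs) and `R` (a unary relation, coded as a subset of `M`). -/
def codedStructure (M E R : ZFSet.{u}) : LStd.Structure ↥M.toSet where
  funMap := fun f _ => f.elim
  RelMap
    | .eps, x => ZFSet.pair (x 0).1 (x 1).1 ∈ E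
    | .r, x => (x 0).1 ∈ R

/-- The ZFC set `S` codes an `L_std`-structure: it is a triple `⟨M, E, R⟩` with `E` a binary
relation on `M` and `R` a unary relation on `M`. -/
def IsLStdCode (S : ZFSet.{u}) : Prop :=
  ∃ M E R : ZFSet.{u}, S = M.pair (E.pair R) ∧
    (∀ p ∈ E, ∃ a ∈ M, ∃ b ∈ M, p = a.pair b) ∧ R ⊆ M

/-- The ZFC set `S` codes an ordinal `L_std`-structure: an `L_std`-structure whose domain is a
(von Neumann) ordinal. -/
def IsOrdinalLStdCode (S : ZFSet.{u}) : Prop :=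
  ∃ M E R : ZFSet.{u}, S = M.pair (E.pair R) ∧ M.IsOrdinal ∧
    (∀ p ∈ E, ∃ a ∈ M, ∃ b ∈ M, p = a.pair b) ∧ R ⊆ M

/-- There is an `L_std`-elementary embedding from the structure coded by `S` into the structure
coded by `T`. -/
def ElemEmbeddable (S T : ZFSet.{u}) : Prop :=
  ∃ M E R N E' R' : ZFSet.{u}, S = M.pair (E.pair R) ∧ T = N.pair (E'.pair R') ∧
    letI := codedStructure M E R
    letI := codedStructure N E' R'
    Nonempty (↥M.toSet ↪ₑ[LStd] ↥N.toSet)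

/-- The structure `⟨V_η, ∈, A ∩ V_η⟩`: the domain consists of the sets of rank `< η`, with `ε`
interpreted as membership and `R` interpreted as membership in the class `A`. -/
def VStructure (η : Ordinal.{u}) (A : Set ZFSet.{u}) :
    LStd.Structure {x : ZFSet.{u} // x.rank < η} where
  funMap := fun f _ => f.elim
  RelMap
    | .eps, x => (x 0).1 ∈ (x 1).1
    | .r, x => (x 0).1 ∈ A

/-- The ZFC set `α` is a (von Neumann) cardinal: it is an ordinal and every one of its elements
has strictly smaller cardinality. -/
def ZFIsCardinal (α : ZFSet.{u}) : Prop :=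
  α.IsOrdinal ∧ ∀ β ∈ α, Cardinal.mk ↥β.toSet < Cardinal.mk ↥α.toSet

/-- For von Neumann ordinals `α`, `η`, `ζ` and a class `A`: there is an elementary embedding
`j : ⟨V_η, ∈, A ∩ V_η⟩ → ⟨V_ζ, ∈, A ∩ V_ζ⟩` with critical point `α` (i.e. `j` fixes every
ordinal `β < α` and moves `α`) such that `j α > η`. -/
def ExtWitness (A : Set ZFSet.{u}) (α η ζ : ZFSet.{u}) : Prop :=
  letI := VStructure η.rank A
  letI := VStructure ζ.rank A
  ∃ j : {x : ZFSet.{u} // x.rank < η.rank} ↪ₑ[LStd] {x : ZFSet.{u} // x.rank < ζ.rank},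
    (∀ (β : ZFSet.{u}) (hβ : β.rank < η.rank), β ∈ α → (j ⟨β, hβ⟩).1 = β) ∧
    ∀ hα : α.rank < η.rank, (j ⟨α, hα⟩).1 ≠ α ∧ η ∈ (j ⟨α, hα⟩).1

/-! Every statement about the structure `⟨γ, E, R⟩` coded by `M` is expressed in `V_η` by a
formula in the parameters `γ, E, R` with bounded quantifiers only: bound the quantifiers by `γ`
and read `x ε y` as "the Kuratowski pair `(x, y)` lies in `E`". The same translation is correct
for `⟨j γ, j E, j R⟩` in `V_ζ`, so elementarity of `j` makes `j ↾ γ` elementary. The other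
conjuncts are single bounded facts (pairing, being an ordinal, being a relation on `γ`,
inclusion, membership in `A`) carried over by `j`, together with `η ∈ j α ⊆ j γ`. -/

open FirstOrder.Language

namespace ZFSet

theorem eq_upair_iff {z x y : ZFSet.{u}} :
    z = {x, y} ↔ (∀ w ∈ z, w = x ∨ w = y) ∧ x ∈ z ∧ y ∈ z := by
  refine ⟨?_, fun ⟨hz, hx, hy⟩ => ext fun w => ?_⟩
  · rintro rfl
    exact ⟨fun w => mem_pair.1, mem_pair.2 (.inl rfl), mem_pair.2 (.inr rfl)⟩
  · rw [mem_pair]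
    exact ⟨hz w, by rintro (rfl | rfl) <;> assumption⟩

theorem eq_pair_iff {p x y : ZFSet.{u}} :
    p = x.pair y ↔ ∃ s ∈ p, ∃ t ∈ p, s = {x, x} ∧ t = {x, y} ∧ p = {s, t} := by
  rw [pair_eq_singleton]
  refine ⟨?_, fun ⟨s, _, t, _, hs, ht, hp⟩ => hp.trans (hs ▸ ht ▸ rfl)⟩
  rintro rfl
  exact ⟨_, mem_pair.2 (.inl rfl), _, mem_pair.2 (.inr rfl), rfl, rfl, rfl⟩

theorem rank_lt_rank_pair_left (a b : ZFSet.{u}) : a.rank < (a.pair b).rank :=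
  (rank_lt_of_mem (mem_singleton.2 rfl)).trans
    (rank_lt_of_mem (mem_pair.2 (.inl rfl)))

theorem rank_lt_rank_pair_right (a b : ZFSet.{u}) : b.rank < (a.pair b).rank :=
  (rank_lt_of_mem (mem_pair.2 (.inr rfl))).trans
    (rank_lt_of_mem (mem_pair.2 (.inr rfl)))

end ZFSet

abbrev V (ρ : Ordinal.{u}) : Type (u + 1) := {x : ZFSet.{u} // x.rank < ρ}

namespace V

variable {ρ : Ordinal.{u}}

def ofMem (y : V ρ) {x : ZFSet.{u}} (hx : x ∈ y.1) : V ρ :=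
  ⟨x, (ZFSet.rank_lt_of_mem hx).trans y.2⟩

@[simp]
theorem val_ofMem (y : V ρ) {x : ZFSet.{u}} (hx : x ∈ y.1) : (ofMem y hx).1 = x := rfl

def inclusion {g : ZFSet.{u}} (hg : g.rank < ρ) (x : g.toSet) : V ρ :=
  ⟨x.1, (ZFSet.rank_lt_of_mem x.2).trans hg⟩

end V

def RealizeInV (ρ : Ordinal.{u}) (A : Set ZFSet.{u}) {α : Type} {n : ℕ}
    (φ : LStd.BoundedFormula α n) (v : α → V ρ) (xs : Fin n → V ρ) : Prop :=
  letI := VStructure ρ A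
  φ.Realize v xs

def RealizeCoded (g E R : ZFSet.{u}) {α : Type} {n : ℕ}
    (φ : LStd.BoundedFormula α n) (v : α → g.toSet) (xs : Fin n → g.toSet) : Prop :=
  letI := codedStructure g E R
  φ.Realize v xs

namespace LStd

variable {α : Type} {n : ℕ}

def varOfTerm : LStd.Term α → α
  | .var a => a
  | .func f _ => Empty.elim f

theorem realize_term {M : Type*} [LStd.Structure M] (t : LStd.Term α) (v : α → M) :
    t.realize v = v (varOfTerm t) := by
  cases t with
  | var => rfl
  | func f => exact Empty.elim f

/-! Under a quantifier, `newVar n` is the variable it binds and `liftVar x` is the outer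
variable `x`. -/

def newVar (n : ℕ) : α ⊕ Fin (n + 1) := .inr (Fin.last n)

def liftVar : α ⊕ Fin n → α ⊕ Fin (n + 1) := Sum.map id Fin.castSucc

@[simp]
theorem elim_snoc_newVar {M : Type*} (v : α → M) (xs : Fin n → M) (x : M) :
    Sum.elim v (Fin.snoc xs x) (newVar n) = x := by
  simp [newVar]

@[simp]
theorem elim_snoc_liftVar {M : Type*} (v : α → M) (xs : Fin n → M) (x : M) (y : α ⊕ Fin n) :
    Sum.elim v (Fin.snoc xs x) (liftVar y) = Sum.elim v xs y := by
  cases y <;> simp [liftVar]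

def equal (x y : α ⊕ Fin n) : LStd.BoundedFormula α n :=
  (Term.var x).bdEqual (.var y)

def mem (x y : α ⊕ Fin n) : LStd.BoundedFormula α n :=
  Relations.boundedFormula₂ (LStdRel.eps : LStd.Relations 2) (.var x) (.var y)

def atomR (x : α ⊕ Fin n) : LStd.BoundedFormula α n :=
  Relations.boundedFormula₁ (LStdRel.r : LStd.Relations 1) (.var x)

def ballMem (x : α ⊕ Fin n) (φ : LStd.BoundedFormula α (n + 1)) : LStd.BoundedFormula α n :=
  ∀' (mem (newVar n) (liftVar x) ⟹ φ)

def bexMem (x : α ⊕ Fin n) (φ : LStd.BoundedFormula α (n + 1)) : LStd.BoundedFormula α n :=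
  ∃' (mem (newVar n) (liftVar x) ⊓ φ)

def upairEq (z x y : α ⊕ Fin n) : LStd.BoundedFormula α n :=
  ballMem z (equal (newVar n) (liftVar x) ⊔ equal (newVar n) (liftVar y)) ⊓
    (mem x z ⊓ mem y z)

def pairEq (p x y : α ⊕ Fin n) : LStd.BoundedFormula α n :=
  bexMem p <| bexMem (liftVar p) <|
    upairEq (liftVar (newVar n)) (liftVar (liftVar x)) (liftVar (liftVar x)) ⊓
    upairEq (newVar (n + 1)) (liftVar (liftVar x)) (liftVar (liftVar y)) ⊓
    upairEq (liftVar (liftVar p)) (liftVar (newVar n)) (newVar (n + 1))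

def pairMem (x y e : α ⊕ Fin n) : LStd.BoundedFormula α n :=
  bexMem e (pairEq (newVar n) (liftVar x) (liftVar y))

def subset (x y : α ⊕ Fin n) : LStd.BoundedFormula α n :=
  ballMem x (mem (newVar n) (liftVar y))

def isTransitive (x : α ⊕ Fin n) : LStd.BoundedFormula α n :=
  ballMem x (subset (newVar n) (liftVar x))

def isOrdinal (x : α ⊕ Fin n) : LStd.BoundedFormula α n :=
  isTransitive x ⊓ ballMem x (isTransitive (newVar n))

def isRelOn (e d : α ⊕ Fin n) : LStd.BoundedFormula α n :=
  ballMem e <| bexMem (liftVar d) <| bexMem (liftVar (liftVar d)) <|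
    pairEq (liftVar (liftVar (newVar n))) (liftVar (newVar (n + 1))) (newVar (n + 2))

section RealizeInV

variable {ρ : Ordinal.{u}} {A : Set ZFSet.{u}} {v : α → V ρ} {xs : Fin n → V ρ}

@[simp]
theorem realizeInV_equal {x y : α ⊕ Fin n} :
    RealizeInV ρ A (equal x y) v xs ↔ (Sum.elim v xs x).1 = (Sum.elim v xs y).1 :=
  let _ := VStructure ρ A
  (BoundedFormula.realize_bdEqual _ _).trans Subtype.ext_iff

@[simp]
theorem realizeInV_mem {x y : α ⊕ Fin n} :
    RealizeInV ρ A (mem x y) v xs ↔ (Sum.elim v xs x).1 ∈ (Sum.elim v xs y).1 :=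
  let _ := VStructure ρ A
  BoundedFormula.realize_rel₂

@[simp]
theorem realizeInV_atomR {x : α ⊕ Fin n} :
    RealizeInV ρ A (atomR x) v xs ↔ (Sum.elim v xs x).1 ∈ A :=
  let _ := VStructure ρ A
  BoundedFormula.realize_rel₁

@[simp]
theorem realizeInV_inf {φ ψ : LStd.BoundedFormula α n} :
    RealizeInV ρ A (φ ⊓ ψ) v xs ↔ RealizeInV ρ A φ v xs ∧ RealizeInV ρ A ψ v xs :=
  let _ := VStructure ρ A
  BoundedFormula.realize_inf

@[simp]
theorem realizeInV_sup {φ ψ : LStd.BoundedFormula α n} :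
    RealizeInV ρ A (φ ⊔ ψ) v xs ↔ RealizeInV ρ A φ v xs ∨ RealizeInV ρ A ψ v xs :=
  let _ := VStructure ρ A
  BoundedFormula.realize_sup

@[simp]
theorem realizeInV_imp {φ ψ : LStd.BoundedFormula α n} :
    RealizeInV ρ A (φ ⟹ ψ) v xs ↔ (RealizeInV ρ A φ v xs → RealizeInV ρ A ψ v xs) :=
  let _ := VStructure ρ A
  BoundedFormula.realize_imp

theorem realizeInV_all {φ : LStd.BoundedFormula α (n + 1)} :
    RealizeInV ρ A (∀' φ) v xs ↔ ∀ x, RealizeInV ρ A φ v (Fin.snoc xs x) :=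
  let _ := VStructure ρ A
  BoundedFormula.realize_all

theorem realizeInV_ex {φ : LStd.BoundedFormula α (n + 1)} :
    RealizeInV ρ A (∃' φ) v xs ↔ ∃ x, RealizeInV ρ A φ v (Fin.snoc xs x) :=
  let _ := VStructure ρ A
  BoundedFormula.realize_ex

@[simp]
theorem realizeInV_ballMem {x : α ⊕ Fin n} {φ : LStd.BoundedFormula α (n + 1)} :
    RealizeInV ρ A (ballMem x φ) v xs ↔
      ∀ y (hy : y ∈ (Sum.elim v xs x).1),
        RealizeInV ρ A φ v (Fin.snoc xs (V.ofMem _ hy)) := by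
  simp only [ballMem, realizeInV_all, realizeInV_imp, realizeInV_mem, elim_snoc_newVar,
    elim_snoc_liftVar]
  exact ⟨fun h y hy => h _ hy, fun h y hy => h y.1 hy⟩

@[simp]
theorem realizeInV_bexMem {x : α ⊕ Fin n} {φ : LStd.BoundedFormula α (n + 1)} :
    RealizeInV ρ A (bexMem x φ) v xs ↔
      ∃ y, ∃ hy : y ∈ (Sum.elim v xs x).1,
        RealizeInV ρ A φ v (Fin.snoc xs (V.ofMem _ hy)) := by
  simp only [bexMem, realizeInV_ex, realizeInV_inf, realizeInV_mem, elim_snoc_newVar,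
    elim_snoc_liftVar]
  exact ⟨fun ⟨y, hy, h⟩ => ⟨y.1, hy, h⟩, fun ⟨y, hy, h⟩ => ⟨_, hy, h⟩⟩

@[simp]
theorem realizeInV_upairEq {z x y : α ⊕ Fin n} :
    RealizeInV ρ A (upairEq z x y) v xs ↔
      (Sum.elim v xs z).1 = {(Sum.elim v xs x).1, (Sum.elim v xs y).1} := by
  simp [upairEq, ZFSet.eq_upair_iff]

@[simp]
theorem realizeInV_pairEq {p x y : α ⊕ Fin n} :
    RealizeInV ρ A (pairEq p x y) v xs ↔
      (Sum.elim v xs p).1 = (Sum.elim v xs x).1.pair (Sum.elim v xs y).1 := by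
  simp [pairEq, ZFSet.eq_pair_iff, and_left_comm]

@[simp]
theorem realizeInV_pairMem {x y e : α ⊕ Fin n} :
    RealizeInV ρ A (pairMem x y e) v xs ↔
      (Sum.elim v xs x).1.pair (Sum.elim v xs y).1 ∈ (Sum.elim v xs e).1 := by
  simp [pairMem]

@[simp]
theorem realizeInV_subset {x y : α ⊕ Fin n} :
    RealizeInV ρ A (subset x y) v xs ↔ (Sum.elim v xs x).1 ⊆ (Sum.elim v xs y).1 := by
  simp only [subset, realizeInV_ballMem, realizeInV_mem, elim_snoc_newVar, elim_snoc_liftVar,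
    V.val_ofMem]
  rfl

@[simp]
theorem realizeInV_isTransitive {x : α ⊕ Fin n} :
    RealizeInV ρ A (isTransitive x) v xs ↔ (Sum.elim v xs x).1.IsTransitive := by
  simp [isTransitive, ZFSet.IsTransitive]

@[simp]
theorem realizeInV_isOrdinal {x : α ⊕ Fin n} :
    RealizeInV ρ A (isOrdinal x) v xs ↔ (Sum.elim v xs x).1.IsOrdinal := by
  simp [isOrdinal, ZFSet.isOrdinal_iff_forall_mem_isTransitive]

@[simp]
theorem realizeInV_isRelOn {e d : α ⊕ Fin n} :
    RealizeInV ρ A (isRelOn e d) v xs ↔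
      ∀ p ∈ (Sum.elim v xs e).1, ∃ a ∈ (Sum.elim v xs d).1, ∃ b ∈ (Sum.elim v xs d).1,
        p = a.pair b := by
  simp [isRelOn]

end RealizeInV

section RealizeCoded

variable {g E R : ZFSet.{u}} {v : α → g.toSet} {xs : Fin n → g.toSet}

theorem realizeCoded_equal {t₁ t₂ : LStd.Term (α ⊕ Fin n)} :
    RealizeCoded g E R (.equal t₁ t₂) v xs ↔
      Sum.elim v xs (varOfTerm t₁) = Sum.elim v xs (varOfTerm t₂) := by
  let _ := codedStructure g E R
  change t₁.realize _ = t₂.realize _ ↔ _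
  rw [realize_term, realize_term]

theorem realizeCoded_eps {ts : Fin 2 → LStd.Term (α ⊕ Fin n)} :
    RealizeCoded g E R (.rel (LStdRel.eps : LStd.Relations 2) ts) v xs ↔
      (Sum.elim v xs (varOfTerm (ts 0))).1.pair (Sum.elim v xs (varOfTerm (ts 1))).1 ∈ E := by
  let _ := codedStructure g E R
  change ((ts 0).realize (Sum.elim v xs)).1.pair ((ts 1).realize (Sum.elim v xs)).1 ∈ E ↔ _
  rw [realize_term, realize_term]

theorem realizeCoded_r {ts : Fin 1 → LStd.Term (α ⊕ Fin n)} :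
    RealizeCoded g E R (.rel (LStdRel.r : LStd.Relations 1) ts) v xs ↔
      (Sum.elim v xs (varOfTerm (ts 0))).1 ∈ R := by
  let _ := codedStructure g E R
  change ((ts 0).realize (Sum.elim v xs)).1 ∈ R ↔ _
  rw [realize_term]

theorem realizeCoded_imp {φ ψ : LStd.BoundedFormula α n} :
    RealizeCoded g E R (φ ⟹ ψ) v xs ↔
      (RealizeCoded g E R φ v xs → RealizeCoded g E R ψ v xs) :=
  let _ := codedStructure g E R
  BoundedFormula.realize_imp

theorem realizeCoded_all {φ : LStd.BoundedFormula α (n + 1)} :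
    RealizeCoded g E R (∀' φ) v xs ↔ ∀ x, RealizeCoded g E R φ v (Fin.snoc xs x) :=
  let _ := codedStructure g E R
  BoundedFormula.realize_all

end RealizeCoded

def liftFree {β : Type} : β ⊕ Fin n → (β ⊕ Fin 3) ⊕ Fin n := Sum.map Sum.inl id

/-- The free variables `inr 0`, `inr 1`, `inr 2` stand for the domain, `E` and `R` of a coded
structure. -/
def relativize {β : Type} :
    ∀ {n : ℕ}, LStd.BoundedFormula β n → LStd.BoundedFormula (β ⊕ Fin 3) n
  | _, .falsum => .falsum
  | _, .equal t₁ t₂ => equal (liftFree (varOfTerm t₁)) (liftFree (varOfTerm t₂))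
  | _, .rel LStdRel.eps ts =>
    pairMem (liftFree (varOfTerm (ts 0))) (liftFree (varOfTerm (ts 1))) (.inl (.inr 1))
  | _, .rel LStdRel.r ts => mem (liftFree (varOfTerm (ts 0))) (.inl (.inr 2))
  | _, .imp φ ψ => relativize φ ⟹ relativize ψ
  | _, .all φ => ballMem (.inl (.inr 0)) (relativize φ)

theorem elim_liftFree {β : Type} {ρ : Ordinal.{u}} {g : ZFSet.{u}} (hg : g.rank < ρ)
    (p : Fin 3 → V ρ) (v : β → g.toSet) (xs : Fin n → g.toSet) (z : β ⊕ Fin n) :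
    Sum.elim (Sum.elim (V.inclusion hg ∘ v) p) (V.inclusion hg ∘ xs) (liftFree z) =
      V.inclusion hg (Sum.elim v xs z) := by
  cases z <;> rfl

theorem realizeInV_relativize {β : Type} {ρ : Ordinal.{u}} {A : Set ZFSet.{u}}
    {g E R : ZFSet.{u}} (hg : g.rank < ρ) (hE : E.rank < ρ) (hR : R.rank < ρ)
    (φ : LStd.BoundedFormula β n) (v : β → g.toSet) (xs : Fin n → g.toSet) :
    RealizeInV ρ A (relativize φ)
        (Sum.elim (V.inclusion hg ∘ v) ![⟨g, hg⟩, ⟨E, hE⟩, ⟨R, hR⟩]) (V.inclusion hg ∘ xs) ↔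
      RealizeCoded g E R φ v xs := by
  induction φ with
  | falsum => exact Iff.rfl
  | equal t₁ t₂ =>
    rw [relativize, realizeInV_equal, realizeCoded_equal, elim_liftFree, elim_liftFree]
    exact Subtype.val_inj (a := Sum.elim v xs _)
  | rel rel ts =>
    cases rel with
    | eps =>
      rw [relativize, realizeInV_pairMem, realizeCoded_eps, elim_liftFree, elim_liftFree]
      rfl
    | r =>
      rw [relativize, realizeInV_mem, realizeCoded_r, elim_liftFree]
      rfl
  | imp φ ψ ihφ ihψ => rw [relativize, realizeInV_imp, realizeCoded_imp, ihφ, ihψ]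
  | all φ ih =>
    rw [relativize, realizeInV_ballMem, realizeCoded_all]
    refine ⟨fun h x => ?_, fun h x hx => ?_⟩
    · rw [← ih, Fin.comp_snoc]
      exact h x.1 x.2
    · have := (ih (Fin.snoc xs ⟨x, hx⟩)).2 (h ⟨x, hx⟩)
      rwa [Fin.comp_snoc] at this

end LStd

abbrev VEmbedding (A : Set ZFSet.{u}) (ρ σ : Ordinal.{u}) : Type (u + 1) :=
  @ElementaryEmbedding LStd (V ρ) (V σ) (VStructure ρ A) (VStructure σ A)

namespace VEmbedding

open LStd

variable {ρ σ : Ordinal.{u}} {A : Set ZFSet.{u}} (j : VEmbedding A ρ σ)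

theorem realizeInV_comp_iff {β : Type} {n : ℕ} (φ : LStd.BoundedFormula β n) (v : β → V ρ)
    (xs : Fin n → V ρ) : RealizeInV σ A φ (j ∘ v) (j ∘ xs) ↔ RealizeInV ρ A φ v xs :=
  let _ := VStructure ρ A
  let _ := VStructure σ A
  j.map_boundedFormula φ v xs

theorem map_mem {x y : V ρ} (h : x.1 ∈ y.1) : (j x).1 ∈ (j y).1 :=
  realizeInV_mem.1 <|
    (j.realizeInV_comp_iff (mem (.inl 0) (.inl 1)) ![x, y] Fin.elim0).2 (realizeInV_mem.2 h)

theorem map_mem_A {x : V ρ} (h : x.1 ∈ A) : (j x).1 ∈ A :=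
  realizeInV_atomR.1 <|
    (j.realizeInV_comp_iff (atomR (.inl 0)) ![x] Fin.elim0).2 (realizeInV_atomR.2 h)

theorem map_pair {p x y : V ρ} (h : p.1 = x.1.pair y.1) : (j p).1 = (j x).1.pair (j y).1 :=
  realizeInV_pairEq.1 <|
    (j.realizeInV_comp_iff (pairEq (.inl 0) (.inl 1) (.inl 2)) ![p, x, y] Fin.elim0).2
      (realizeInV_pairEq.2 h)

theorem map_subset {x y : V ρ} (h : x.1 ⊆ y.1) : (j x).1 ⊆ (j y).1 :=
  realizeInV_subset.1 <|
    (j.realizeInV_comp_iff (subset (.inl 0) (.inl 1)) ![x, y] Fin.elim0).2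
      (realizeInV_subset.2 h)

theorem isOrdinal_map {x : V ρ} (h : x.1.IsOrdinal) : (j x).1.IsOrdinal :=
  realizeInV_isOrdinal.1 <|
    (j.realizeInV_comp_iff (isOrdinal (.inl 0)) ![x] Fin.elim0).2 (realizeInV_isOrdinal.2 h)

theorem isRelOn_map {e d : V ρ} (h : ∀ p ∈ e.1, ∃ a ∈ d.1, ∃ b ∈ d.1, p = a.pair b) :
    ∀ p ∈ (j e).1, ∃ a ∈ (j d).1, ∃ b ∈ (j d).1, p = a.pair b :=
  realizeInV_isRelOn.1 <|
    (j.realizeInV_comp_iff (isRelOn (.inl 0) (.inl 1)) ![e, d] Fin.elim0).2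
      (realizeInV_isRelOn.2 h)

def restrictCoded {g E R : ZFSet.{u}} (hg : g.rank < ρ) (hE : E.rank < ρ) (hR : R.rank < ρ) :
    @ElementaryEmbedding LStd g.toSet (j ⟨g, hg⟩).1.toSet (codedStructure g E R)
      (codedStructure (j ⟨g, hg⟩).1 (j ⟨E, hE⟩).1 (j ⟨R, hR⟩).1) :=
  letI := codedStructure g E R
  letI := codedStructure (j ⟨g, hg⟩).1 (j ⟨E, hE⟩).1 (j ⟨R, hR⟩).1
  ⟨fun x => ⟨(j (V.inclusion hg x)).1, map_mem j (y := ⟨g, hg⟩) x.2⟩, fun k φ x => by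
    change RealizeCoded _ _ _ φ _ default ↔ RealizeCoded g E R φ x default
    rw [← realizeInV_relativize (A := A) (j ⟨g, hg⟩).2 (j ⟨E, hE⟩).2 (j ⟨R, hR⟩).2,
      ← realizeInV_relativize (A := A) hg hE hR, ← j.realizeInV_comp_iff]
    refine Eq.to_iff (congrArg₂ _ ?_ ?_)
    · ext (i | i)
      · rfl
      · fin_cases i <;> rfl
    · ext i
      exact i.elim0⟩

end VEmbedding

theorem restriction_isElementary_general (A : Set ZFSet.{u}) (α η ζ : ZFSet.{u}) :
    letI := VStructure η.rank A
    letI := VStructure ζ.rank A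
    ∀ j : {x : ZFSet.{u} // x.rank < η.rank} ↪ₑ[LStd] {x : ZFSet.{u} // x.rank < ζ.rank},
      -- `j` has critical point `α` ...
      (∀ (β : ZFSet.{u}) (hβ : β.rank < η.rank), β ∈ α → (j ⟨β, hβ⟩).1 = β) →
      (∀ hα' : α.rank < η.rank, (j ⟨α, hα'⟩).1 ≠ α ∧ η ∈ (j ⟨α, hα'⟩).1) →
      -- ... and `M = ⟨γ, E, R⟩ ∈ A ∩ V_η` is an ordinal `L_std`-structure with `α ≤ γ < η`.
      ∀ (M γ E R : ZFSet.{u}) (hMη : M.rank < η.rank) (hγη : γ.rank < η.rank),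
        M ∈ A → M = γ.pair (E.pair R) → γ.IsOrdinal →
        (∀ p ∈ E, ∃ a ∈ γ, ∃ b ∈ γ, p = a.pair b) → R ⊆ γ →
        α ⊆ γ → γ ∈ η →
        -- Then `j M ∈ A ∩ V_ζ` ...
        ((j ⟨M, hMη⟩).1 ∈ A ∧ (j ⟨M, hMη⟩).1.rank < ζ.rank) ∧
        -- ... and `j M` is an ordinal `L_std`-structure with domain `j γ > η > γ` ...
        ∃ E' R' : ZFSet.{u},
          (j ⟨M, hMη⟩).1 = (j ⟨γ, hγη⟩).1.pair (E'.pair R') ∧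
          (j ⟨γ, hγη⟩).1.IsOrdinal ∧
          (∀ p ∈ E', ∃ a ∈ (j ⟨γ, hγη⟩).1, ∃ b ∈ (j ⟨γ, hγη⟩).1, p = a.pair b) ∧
          R' ⊆ (j ⟨γ, hγη⟩).1 ∧
          η ∈ (j ⟨γ, hγη⟩).1 ∧ γ ∈ η ∧
          -- ... and `j ↾ γ` is an `L_std`-elementary embedding from `M` into `j M`.
          (letI := codedStructure γ E R
           letI := codedStructure (j ⟨γ, hγη⟩).1 E' R'
           ∃ e : ↥γ.toSet ↪ₑ[LStd] ↥(j ⟨γ, hγη⟩).1.toSet,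
             ∀ (β : ZFSet.{u}) (hβγ : β ∈ γ) (hβη : β.rank < η.rank),
               (e ⟨β, hβγ⟩).1 = (j ⟨β, hβη⟩).1) := by
  intro j _ hcrit M γ E R hMη hγη hMA hM hγ hErel hRγ hαγ hγ_mem
  subst hM
  have hX : (E.pair R).rank < η.rank := (ZFSet.rank_lt_rank_pair_right _ _).trans hMη
  have hE : E.rank < η.rank := (ZFSet.rank_lt_rank_pair_left _ _).trans hX
  have hR : R.rank < η.rank := (ZFSet.rank_lt_rank_pair_right _ _).trans hX
  have hα : α.rank < η.rank := (ZFSet.rank_mono hαγ).trans_lt hγη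
  refine ⟨⟨VEmbedding.map_mem_A j hMA, (j _).2⟩, (j ⟨E, hE⟩).1, (j ⟨R, hR⟩).1, ?_,
    VEmbedding.isOrdinal_map j hγ, VEmbedding.isRelOn_map j (d := ⟨γ, hγη⟩) hErel,
    VEmbedding.map_subset j (y := ⟨γ, hγη⟩) hRγ,
    VEmbedding.map_subset j (x := ⟨α, hα⟩) (y := ⟨γ, hγη⟩) hαγ (hcrit hα).2,
    hγ_mem, VEmbedding.restrictCoded j hγη hE hR, fun _ _ _ => rfl⟩
  rw [VEmbedding.map_pair j (x := ⟨γ, hγη⟩) (y := ⟨_, hX⟩) rfl,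
    VEmbedding.map_pair j (p := ⟨_, hX⟩) (x := ⟨E, hE⟩) (y := ⟨R, hR⟩) rfl]

/-- Let `A` be a class of sets, let `α < η ≤ ζ` be (von Neumann) ordinals, and let
`j : ⟨V_η, ∈, A ∩ V_η⟩ → ⟨V_ζ, ∈, A ∩ V_ζ⟩` be an elementary embedding with critical point `α`
and `j α > η`.  If `M ∈ A ∩ V_η` is an ordinal `L_std`-structure whose domain is an ordinal `γ`
with `α ≤ γ < η`, then `j M ∈ A ∩ V_ζ`, `j M` is an ordinal `L_std`-structure with domain
`j γ > η > γ`, and the restriction `j ↾ γ` is an `L_std`-elementary embedding from `M` into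
`j M`. -/
theorem restriction_isElementary (A : Set ZFSet.{u}) (α η ζ : ZFSet.{u})
    (hα : α.IsOrdinal) (hη : η.IsOrdinal) (hζ : ζ.IsOrdinal)
    (hαη : α ∈ η) (hηζ : η ⊆ ζ) :
    letI := VStructure η.rank A
    letI := VStructure ζ.rank A
    ∀ j : {x : ZFSet.{u} // x.rank < η.rank} ↪ₑ[LStd] {x : ZFSet.{u} // x.rank < ζ.rank},
      -- `j` has critical point `α` ...
      (∀ (β : ZFSet.{u}) (hβ : β.rank < η.rank), β ∈ α → (j ⟨β, hβ⟩).1 = β) →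
      (∀ hα' : α.rank < η.rank, (j ⟨α, hα'⟩).1 ≠ α ∧ η ∈ (j ⟨α, hα'⟩).1) →
      -- ... and `M = ⟨γ, E, R⟩ ∈ A ∩ V_η` is an ordinal `L_std`-structure with `α ≤ γ < η`.
      ∀ (M γ E R : ZFSet.{u}) (hMη : M.rank < η.rank) (hγη : γ.rank < η.rank),
        M ∈ A → M = γ.pair (E.pair R) → γ.IsOrdinal →
        (∀ p ∈ E, ∃ a ∈ γ, ∃ b ∈ γ, p = a.pair b) → R ⊆ γ →
        α ⊆ γ → γ ∈ η →
        -- Then `j M ∈ A ∩ V_ζ` ...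
        ((j ⟨M, hMη⟩).1 ∈ A ∧ (j ⟨M, hMη⟩).1.rank < ζ.rank) ∧
        -- ... and `j M` is an ordinal `L_std`-structure with domain `j γ > η > γ` ...
        ∃ E' R' : ZFSet.{u},
          (j ⟨M, hMη⟩).1 = (j ⟨γ, hγη⟩).1.pair (E'.pair R') ∧
          (j ⟨γ, hγη⟩).1.IsOrdinal ∧
          (∀ p ∈ E', ∃ a ∈ (j ⟨γ, hγη⟩).1, ∃ b ∈ (j ⟨γ, hγη⟩).1, p = a.pair b) ∧
          R' ⊆ (j ⟨γ, hγη⟩).1 ∧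
          η ∈ (j ⟨γ, hγη⟩).1 ∧ γ ∈ η ∧
          -- ... and `j ↾ γ` is an `L_std`-elementary embedding from `M` into `j M`.
          (letI := codedStructure γ E R
           letI := codedStructure (j ⟨γ, hγη⟩).1 E' R'
           ∃ e : ↥γ.toSet ↪ₑ[LStd] ↥(j ⟨γ, hγη⟩).1.toSet,
             ∀ (β : ZFSet.{u}) (hβγ : β ∈ γ) (hβη : β.rank < η.rank),
               (e ⟨β, hβγ⟩).1 = (j ⟨β, hβη⟩).1) :=
  restriction_isElementary_general A α η ζ
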